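/- arXiv:2208.01601 — 2 statements merged into one kernel-verified Lean document; each statement's English description precedes it below -/
import Mathlib

section
/- Let q be a prime power, and suppose v ∈ ℤ and D(X) ∈ F_{q²}[X] are such that x ↦ x^v · D(x)^{q-1} permutes μ_{q+1}. Let s, t be positive integers with gcd(s+1, q) = 1 and gcd((q+1)/gcd(t, q+1), s+1) = 1. If r is a positive integer with gcd(r, q-1) = 1 and r ≡ v + st (mod q+1), then X^r · B(X^{q-1}) permutes F_{q²}, where B(X) := D(X) · ∑_{j=0}^{s} X^{jt}. -/
/-!
By the criterion of Park–Lee and Zieve, `X^r h(X^{q-1})` permutes `F_{q²}` as soon as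
`gcd(r, q-1) = 1` and `x ↦ x^r h(x)^{q-1}` permutes `μ_{q+1}`. So it suffices that
`x^r B(x)^{q-1} = x^v D(x)^{q-1}` on `μ_{q+1}`. There `x^r = x^v y^s` with `y = x^t`, and
`S = 1 + y + ⋯ + y^s` is nonzero by the two gcd conditions; since `z ↦ z^q` inverts `y`,
`S^q = S(y⁻¹) = y^{-s} S`, i.e. `y^s S^{q-1} = 1`.
-/

open Finset Function Set

lemma zpow_eq_zpow_of_modEq {G₀ : Type*} [GroupWithZero G₀] {x : G₀} {n : ℕ} {a b : ℤ}
    (hx : x ^ n = 1) (hab : a ≡ b [ZMOD n]) : x ^ a = x ^ b := by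
  obtain ⟨k, hk⟩ := hab.dvd
  rcases eq_or_ne x 0 with rfl | hx0
  · obtain rfl : n = 0 := by by_contra hn; simp [zero_pow hn] at hx
    simp only [Nat.cast_zero, zero_mul, sub_eq_zero] at hk
    rw [hk]
  · rw [show b = a + n * k by linarith, zpow_add₀ hx0, zpow_mul, zpow_natCast, hx, one_zpow,
      mul_one]

lemma pow_eq_one_of_coprime_div_gcd {M : Type*} [Monoid M] {x : M} {n t m : ℕ}
    (hx : x ^ n = 1) (hxt : (x ^ t) ^ m = 1) (hcop : Nat.Coprime (n / Nat.gcd t n) m) :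
    x ^ t = 1 := by
  have hxtn : (x ^ t) ^ (n / Nat.gcd t n) = 1 := by
    rw [← pow_mul, ← Nat.mul_div_assoc _ (Nat.gcd_dvd_right t n), mul_comm,
      Nat.mul_div_assoc _ (Nat.gcd_dvd_left t n), pow_mul, hx, one_pow]
  exact (pow_eq_one_iff_of_coprime hcop).1 ⟨hxtn, hxt⟩

lemma natCast_ne_zero_of_coprime {R : Type*} [NonAssocSemiring R] [Nontrivial R] {m n : ℕ}
    (hn : (n : R) = 0) (hmn : m.Coprime n) : (m : R) ≠ 0 := fun hm =>
  CharP.ringChar_ne_one <| Nat.dvd_one.1 <| hmn ▸ Nat.dvd_gcd (ringChar.dvd hm) (ringChar.dvd hn)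

lemma FiniteField.exists_prime_pow_eq_of_card_eq_sq {F : Type*} [Field F] [Fintype F] {q : ℕ}
    (hF : Fintype.card F = q ^ 2) : ∃ p k : ℕ, CharP F p ∧ p.Prime ∧ q = p ^ k := by
  obtain ⟨p, hchar, n, hp, hcard⟩ := FiniteField.card' F
  obtain ⟨k, -, hk⟩ := (Nat.dvd_prime_pow hp).1 <| show q ∣ p ^ (n : ℕ) by
    rw [← hcard, hF]; exact dvd_pow_self q two_ne_zero
  exact ⟨p, k, hchar, hp, hk⟩

lemma geom_sum_ne_zero_of_natCast_ne_zero {K : Type*} [Field K] {y : K} {n : ℕ} (hn : (n : K) ≠ 0)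
    (hy : y ^ n = 1 → y = 1) : ∑ i ∈ range n, y ^ i ≠ 0 := by
  intro h
  by_cases hy1 : y = 1
  · simp [hy1, hn] at h
  · refine hy1 (hy ?_)
    rw [← sub_eq_zero, ← geom_sum_mul, h, zero_mul]

lemma pow_mul_geom_sum_inv {K : Type*} [Field K] {y : K} (hy : y ≠ 0) (s : ℕ) :
    y ^ s * ∑ i ∈ range (s + 1), y⁻¹ ^ i = ∑ i ∈ range (s + 1), y ^ i := by
  rw [mul_sum, ← sum_range_reflect]
  refine sum_congr rfl fun i hi => ?_
  have his : i ≤ s := Nat.lt_succ_iff.1 (mem_range.1 hi)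
  rw [Nat.add_sub_cancel, inv_pow, ← pow_sub₀ y hy (Nat.sub_le s i), Nat.sub_sub_self his]

lemma pow_mul_geom_sum_pow_sub_one_eq_one {K : Type*} [Field K] {p k : ℕ} [ExpChar K p]
    {y : K} (hy : y ^ (p ^ k + 1) = 1) {s : ℕ} (hS : ∑ i ∈ range (s + 1), y ^ i ≠ 0) :
    y ^ s * (∑ i ∈ range (s + 1), y ^ i) ^ (p ^ k - 1) = 1 := by
  have hy0 : y ≠ 0 := by rintro rfl; simp at hy
  have hyq : y ^ p ^ k = y⁻¹ := eq_inv_of_mul_eq_one_left (by rw [← pow_succ, hy])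
  have hfrob : y ^ s * (∑ i ∈ range (s + 1), y ^ i) ^ p ^ k = ∑ i ∈ range (s + 1), y ^ i := by
    simp_rw [sum_pow_char_pow, ← pow_mul, mul_comm _ (p ^ k), pow_mul, hyq]
    exact pow_mul_geom_sum_inv hy0 s
  have hq : p ^ k - 1 + 1 = p ^ k := Nat.sub_add_cancel (Nat.one_le_pow _ _ (expChar_pos K p))
  refine mul_right_cancel₀ hS ?_
  rw [mul_assoc, ← pow_succ, hq, hfrob, one_mul]

/-- One direction of the Park–Lee / Zieve criterion. -/
lemma bijective_pow_mul_comp_pow {F : Type*} [Field F] [Fintype F] {d e r : ℕ}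
    (hde : d * e = Fintype.card F - 1) (hr : 0 < r) (hre : r.Coprime e) {h : F → F}
    (hmaps : MapsTo (fun x => x ^ r * h x ^ e) {x | x ^ d = 1} {x | x ^ d = 1})
    (hinj : InjOn (fun x => x ^ r * h x ^ e) {x | x ^ d = 1}) :
    Bijective fun c => c ^ r * h (c ^ e) := by
  set f : F → F := fun c => c ^ r * h (c ^ e)
  have hde0 : d * e ≠ 0 := by
    have := Fintype.one_lt_card (α := F)
    omega
  have hμ : ∀ c : F, c ≠ 0 → (c ^ e) ^ d = 1 := fun c hc => by
    rw [← pow_mul, mul_comm, hde, FiniteField.pow_card_sub_one_eq_one c hc]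
  have hfe : ∀ c, f c ^ e = (c ^ e) ^ r * h (c ^ e) ^ e := fun c => by
    simp only [f, mul_pow, ← pow_mul, mul_comm r e]
  have hf0 : ∀ c, f c = 0 → c = 0 := fun c hfc => by
    by_contra hc
    have : ((c ^ e) ^ r * h (c ^ e) ^ e) ^ d = 1 := hmaps (hμ c hc)
    rw [← hfe, hfc, zero_pow (right_ne_zero_of_mul hde0), zero_pow (left_ne_zero_of_mul hde0)]
      at this
    exact zero_ne_one this
  rw [← Finite.injective_iff_bijective]
  intro c₁ c₂ heq
  by_cases hc₁ : c₁ = 0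
  · rw [hc₁, hf0 c₂ (heq ▸ by simp [f, hc₁, zero_pow hr.ne'])]
  have hc₂ : c₂ ≠ 0 := fun hc₂ => hc₁ (hf0 c₁ (heq ▸ by simp [f, hc₂, zero_pow hr.ne']))
  have hce : c₁ ^ e = c₂ ^ e := hinj (hμ c₁ hc₁) (hμ c₂ hc₂) (by simp only [← hfe, heq])
  have hcr : c₁ ^ r = c₂ ^ r := by
    refine mul_right_cancel₀ (right_ne_zero_of_mul (a := c₁ ^ r) fun h0 => hc₁ (hf0 c₁ h0)) ?_
    simpa only [f, hce] using heq
  refine (div_eq_one_iff_eq hc₂).1 <| (pow_eq_one_iff_of_coprime hre).1 ⟨?_, ?_⟩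
  · rw [div_pow, hcr, div_self (pow_ne_zero _ hc₂)]
  · rw [div_pow, hce, div_self (pow_ne_zero _ hc₂)]

theorem stmt_3_general (q : ℕ)
    (F : Type) [Field F] [Fintype F] (hF : Fintype.card F = q ^ 2)
    (v : ℤ) (D : Polynomial F)
    (hD : Set.BijOn (fun x : F => x ^ v * D.eval x ^ (q - 1))
      {x : F | x ^ (q + 1) = 1} {x : F | x ^ (q + 1) = 1})
    (s t : ℕ)
    (h1 : Nat.gcd (s + 1) q = 1)
    (h2 : Nat.gcd ((q + 1) / Nat.gcd t (q + 1)) (s + 1) = 1)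
    (r : ℕ) (hr : 0 < r) (hrq : Nat.gcd r (q - 1) = 1)
    (hmod : (r : ℤ) ≡ v + (s * t : ℕ) [ZMOD (q + 1)])
    (B : Polynomial F)
    (hB : B = D * ∑ j ∈ Finset.range (s + 1), Polynomial.X ^ (j * t)) :
    Function.Bijective (fun c : F => c ^ r * B.eval (c ^ (q - 1))) := by
  have hq0 : (q : F) = 0 := pow_eq_zero_iff two_ne_zero |>.1 <| by
    rw [← Nat.cast_pow, ← hF, FiniteField.cast_card_eq_zero]
  have hs1 : ((s + 1 : ℕ) : F) ≠ 0 := natCast_ne_zero_of_coprime hq0 h1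
  obtain ⟨p, k, hchar, hp, rfl⟩ := FiniteField.exists_prime_pow_eq_of_card_eq_sq hF
  have := ExpChar.prime (R := F) hp
  have hBeval : ∀ x : F, B.eval x = D.eval x * ∑ j ∈ range (s + 1), (x ^ t) ^ j := fun x => by
    simp [hB, Polynomial.eval_finsetSum, ← pow_mul, mul_comm]
  have hkey : EqOn (fun x : F => x ^ v * D.eval x ^ (p ^ k - 1))
      (fun x => x ^ r * B.eval x ^ (p ^ k - 1)) {x | x ^ (p ^ k + 1) = 1} := by
    intro x hx
    have hxt : (x ^ t) ^ (p ^ k + 1) = 1 := by rw [pow_right_comm, hx, one_pow]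
    have hS := geom_sum_ne_zero_of_natCast_ne_zero hs1
      (pow_eq_one_of_coprime_div_gcd hx · h2)
    have hxr : x ^ r = x ^ v * (x ^ t) ^ s := by
      rw [← zpow_natCast, zpow_eq_zpow_of_modEq (n := p ^ k + 1) hx (by exact_mod_cast hmod),
        zpow_add₀ (by rintro rfl; simp at hx), zpow_natCast, mul_comm s t, pow_mul]
    simp only
    rw [hxr, hBeval, mul_pow, mul_mul_mul_comm, pow_mul_geom_sum_pow_sub_one_eq_one hxt hS, mul_one]
  have hbij := hD.congr hkey
  exact bijective_pow_mul_comp_pow (by rw [hF, sq, mul_self_tsub_one]) hr hrq hbij.mapsTo hbij.injOn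

/-- Corollary 3.1: from a permutation `x ↦ x^v D(x)^{q-1}` of `μ_{q+1}` one obtains the
permutation polynomial `X^r B(X^{q-1})` of `F_{q²}` with `B = D·∑_{j=0}^{s} X^{jt}`. -/
theorem stmt_3 (q : ℕ) (hq : ∃ p n : ℕ, p.Prime ∧ 0 < n ∧ q = p ^ n)
    (F : Type) [Field F] [Fintype F] (hF : Fintype.card F = q ^ 2)
    (v : ℤ) (D : Polynomial F)
    (hD : Set.BijOn (fun x : F => x ^ v * D.eval x ^ (q - 1))
      {x : F | x ^ (q + 1) = 1} {x : F | x ^ (q + 1) = 1})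
    (s t : ℕ) (hs : 0 < s) (ht : 0 < t)
    (h1 : Nat.gcd (s + 1) q = 1)
    (h2 : Nat.gcd ((q + 1) / Nat.gcd t (q + 1)) (s + 1) = 1)
    (r : ℕ) (hr : 0 < r) (hrq : Nat.gcd r (q - 1) = 1)
    (hmod : (r : ℤ) ≡ v + (s * t : ℕ) [ZMOD (q + 1)])
    (B : Polynomial F)
    (hB : B = D * ∑ j ∈ Finset.range (s + 1), Polynomial.X ^ (j * t)) :
    Function.Bijective (fun c : F => c ^ r * B.eval (c ^ (q - 1))) :=
  stmt_3_general q F hF v D hD s t h1 h2 r hr hrq hmod B hB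
end

section
/- Let k, ℓ, t be positive integers with k even, set q := 2^k, Q := 2^ℓ, and suppose ord₂(ℓ) ≤ ord₂(k). Let D(X) := X^{Q+1} + X + 1 and B(X) := D(X) · (X^{2t} + X^t + 1). If r is a positive integer with gcd(r, q-1) = 1 and r ≡ Q + 1 + 2t (mod q+1), then X^r · B(X^{q-1}) is a permutation polynomial of F_{q²}. -/
/-!
For `c ≠ 0` the point `x = c^(q-1)` lies on the unit circle `x^(q+1) = 1`, where the Frobenius
`z ↦ z^q` acts as inversion. Hence, writing `D̃ = X^(Q+1) + X^Q + 1` for the reciprocal of `D`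
(the second factor of `B` is self-reciprocal), `f(c) = c^r B(x)` satisfies
`f(c)^(q-1) = D̃(x) / D(x)`. So `f(c) = f(c')` forces `x = x'` once `D̃ / D` is injective on the
unit circle, and then `c = c'` because `c^r = c'^r`, `c^(q-1) = c'^(q-1)` and `gcd(r, q-1) = 1`.

If `D̃(x) = s D(x)` then `x^Q = (s x + s + 1) / ((s + 1) x + 1)`, a Möbius map fixing the primitive
cube roots of unity `ω, ω²`; in the coordinate `(z + ω) / (z + ω²)` it becomes a scaling. For two
such points `x, y` the ratio `V` of their coordinates therefore satisfies `V^(q+1) = 1` and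
`V^Q = V^(±1)`, the sign depending on whether `z ↦ z^Q` fixes or swaps `ω, ω²`. The condition
`ord₂ ℓ ≤ ord₂ k` makes `2^ℓ - 1` (resp. `2^(2ℓ) - 1`) coprime to `2^k + 1`, so `V = 1`.
-/

namespace Nat

theorem gcd_two_mul_right_of_padicValNat_le {a b : ℕ} (ha : a ≠ 0)
    (h : padicValNat 2 a ≤ padicValNat 2 b) : gcd a (2 * b) = gcd a b := by
  rcases eq_or_ne b 0 with rfl | hb
  · rfl
  refine dvd_antisymm (dvd_gcd (gcd_dvd_left _ _) ?_) (gcd_dvd_gcd_mul_left_right _ _ _)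
  have hg : gcd a (2 * b) ≠ 0 := gcd_ne_zero_left ha
  rw [← factorization_le_iff_dvd hg hb]
  intro p
  by_cases hp : p = 2
  · subst hp
    calc (gcd a (2 * b)).factorization 2 ≤ a.factorization 2 :=
          (factorization_le_iff_dvd hg ha).mpr (gcd_dvd_left _ _) 2
      _ ≤ b.factorization 2 := by simpa only [factorization_def _ prime_two] using h
  · calc (gcd a (2 * b)).factorization p ≤ (2 * b).factorization p :=
          (factorization_le_iff_dvd hg (mul_ne_zero two_ne_zero hb)).mpr (gcd_dvd_right _ _) p
      _ = b.factorization p := by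
          simp [factorization_mul two_ne_zero hb, prime_two.factorization, hp]

theorem coprime_two_pow_sub_one_two_pow_add_one {a b : ℕ} (ha : a ≠ 0)
    (h : padicValNat 2 a ≤ padicValNat 2 b) : Coprime (2 ^ a - 1) (2 ^ b + 1) := by
  have hsq : 2 ^ (2 * b) - 1 = (2 ^ b + 1) * (2 ^ b - 1) := by
    rw [pow_mul', ← sq_sub_sq, one_pow]
  have hdvd : gcd (2 ^ a - 1) (2 ^ b + 1) ∣ 2 ^ b - 1 :=
    calc gcd (2 ^ a - 1) (2 ^ b + 1) ∣ gcd (2 ^ a - 1) (2 ^ (2 * b) - 1) :=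
          gcd_dvd_gcd_of_dvd_right _ (hsq ▸ dvd_mul_right _ _)
      _ = 2 ^ gcd a b - 1 := by
          rw [pow_sub_one_gcd_pow_sub_one, gcd_two_mul_right_of_padicValNat_le ha h]
      _ ∣ 2 ^ b - 1 := by
          rw [← gcd_eq_left_iff_dvd, pow_sub_one_gcd_pow_sub_one, gcd_eq_left (gcd_dvd_right a b)]
  have hodd : Odd (gcd (2 ^ a - 1) (2 ^ b + 1)) :=
    (Even.sub_odd Nat.one_le_two_pow (even_pow.mpr ⟨even_two, ha⟩) odd_one).of_dvd_nat
      (gcd_dvd_left _ _)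
  have h2 : gcd (2 ^ a - 1) (2 ^ b + 1) ∣ 2 := by
    have := Nat.dvd_sub (gcd_dvd_right _ _) hdvd
    rwa [show 2 ^ b + 1 - (2 ^ b - 1) = 2 by have := @Nat.one_le_two_pow b; omega] at this
  rcases (dvd_prime prime_two).mp h2 with h1 | h1
  · exact h1
  · exact absurd (h1 ▸ hodd) (by decide)

theorem coprime_three_two_pow_add_one {k : ℕ} (hk : Even k) : Coprime 3 (2 ^ k + 1) := by
  obtain ⟨m, rfl⟩ := hk
  rw [Prime.coprime_iff_not_dvd prime_three, ← two_mul, pow_mul, dvd_iff_mod_eq_zero,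
    add_mod, pow_mod]
  norm_num

end Nat

theorem eq_of_pow_eq_pow_of_coprime {G₀ : Type*} [CommGroupWithZero G₀] {a b : G₀} {m n : ℕ}
    (hb : b ≠ 0) (hmn : m.Coprime n) (hm : a ^ m = b ^ m) (hn : a ^ n = b ^ n) : a = b := by
  rw [← div_eq_one_iff_eq hb, ← pow_eq_one_iff_of_coprime hmn, div_pow, div_pow, hm, hn,
    div_self (pow_ne_zero _ hb), div_self (pow_ne_zero _ hb)]
  exact ⟨rfl, rfl⟩

theorem eq_one_of_pow_two_pow_eq_self {G₀ : Type*} [GroupWithZero G₀] {k l : ℕ} (hl : l ≠ 0)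
    (hord : padicValNat 2 l ≤ padicValNat 2 k) {x : G₀}
    (hxk : x ^ (2 ^ k + 1) = 1) (hxl : x ^ 2 ^ l = x) : x = 1 := by
  have hx : x ≠ 0 := by rintro rfl; simp at hxk
  have hxl' : x ^ (2 ^ l - 1) = 1 :=
    (mul_eq_right₀ hx).mp (by rw [pow_sub_one_mul (by positivity), hxl])
  exact (pow_eq_one_iff_of_coprime
    (Nat.coprime_two_pow_sub_one_two_pow_add_one hl hord)).mp ⟨hxl', hxk⟩

theorem pow_two_pow_of_even {M : Type*} [Monoid M] {ω : M} (hω : ω ^ 3 = 1) {n : ℕ}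
    (hn : Even n) : ω ^ 2 ^ n = ω := by
  obtain ⟨m, rfl⟩ := hn
  have h : 2 ^ (m + m) ≡ 1 [MOD 3] := by
    simpa [← two_mul, pow_mul] using Nat.ModEq.pow m (show 4 ≡ 1 [MOD 3] by decide)
  rw [pow_eq_pow_of_modEq h hω, pow_one]

theorem pow_two_pow_of_odd {M : Type*} [Monoid M] {ω : M} (hω : ω ^ 3 = 1) {n : ℕ}
    (hn : Odd n) : ω ^ 2 ^ n = ω ^ 2 := by
  obtain ⟨m, rfl⟩ := hn
  have h : 2 ^ (2 * m + 1) ≡ 2 [MOD 3] := by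
    simpa [pow_succ, pow_mul] using (Nat.ModEq.pow m (show 4 ≡ 1 [MOD 3] by decide)).mul_right 2
  exact pow_eq_pow_of_modEq h hω

theorem sq_sq_add_sq_add_one_eq_zero {R : Type*} [CommRing R] {ω : R} (hω : ω ^ 2 + ω + 1 = 0) :
    (ω ^ 2) ^ 2 + ω ^ 2 + 1 = 0 := by
  linear_combination (ω ^ 2 - ω + 1) * hω

section Field

variable {F : Type*} [Field F]

theorem pow_sub_one_pow_add_one_eq_one [Fintype F] {q : ℕ} (hF : Fintype.card F = q ^ 2)
    {c : F} (hc : c ≠ 0) : (c ^ (q - 1)) ^ (q + 1) = 1 := by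
  rw [← pow_mul, mul_comm, ← Nat.sq_sub_sq, one_pow, ← hF]
  exact FiniteField.pow_card_sub_one_eq_one c hc

theorem exists_sq_add_self_add_one_eq_zero [Fintype F] {k : ℕ}
    (hF : Fintype.card F = (2 ^ k) ^ 2) :
    ∃ ω : F, ω ^ 2 + ω + 1 = 0 := by
  classical
  have h3 : 3 ∣ Fintype.card Fˣ := by
    rw [Fintype.card_units, hF, ← pow_mul, mul_comm, pow_mul]
    simpa using Nat.sub_dvd_pow_sub_pow 4 1 k
  obtain ⟨u, hu⟩ := exists_prime_orderOf_dvd_card 3 h3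
  have hu3 : (u : F) ^ 3 = 1 := by
    rw [← Units.val_pow_eq_pow_val, ← hu, pow_orderOf_eq_one, Units.val_one]
  have hu1 : (u : F) ≠ 1 := by
    intro h
    rw [Units.val_eq_one.mp h, orderOf_one] at hu
    exact absurd hu (by norm_num)
  refine ⟨u, (mul_eq_zero.mp ?_).resolve_left (sub_ne_zero.mpr hu1)⟩
  linear_combination hu3

/-- In characteristic `2` this sends `ω, ω²` to `0, ∞`. -/
def cayley (ω z : F) : F := (z + ω) / (z + ω ^ 2)

theorem cayley_sq {ω : F} (hω : ω ^ 2 + ω + 1 = 0) (z : F) :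
    cayley (ω ^ 2) z = (cayley ω z)⁻¹ := by
  have h : (ω ^ 2) ^ 2 = ω := by linear_combination ω * (ω - 1) * hω
  rw [cayley, cayley, h, inv_div]

end Field

section CharTwo

variable {F : Type*} [Field F] [CharP F 2]

theorem sq_add_self_add_one_ne_zero {k : ℕ} (hk : Even k) {x : F} (hx : x ^ (2 ^ k + 1) = 1) :
    x ^ 2 + x + 1 ≠ 0 := by
  intro h
  have hx1 : x = 1 := (pow_eq_one_iff_of_coprime (Nat.coprime_three_two_pow_add_one hk)).mp
    ⟨by linear_combination (x - 1) * h, hx⟩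
  subst hx1
  exact one_ne_zero (by linear_combination h - CharTwo.two_eq_zero (R := F) : (1 : F) = 0)

theorem add_ne_zero_of_sq_add_self_add_one_eq_zero {k : ℕ} (hk : Even k) {x ω : F}
    (hx : x ^ (2 ^ k + 1) = 1) (hω : ω ^ 2 + ω + 1 = 0) : x + ω ≠ 0 := by
  intro h
  obtain rfl : x = ω := by linear_combination h - ω * CharTwo.two_eq_zero (R := F)
  exact sq_add_self_add_one_ne_zero hk hx hω

theorem cayley_pow_two_pow (ω z : F) (n : ℕ) :
    cayley ω z ^ 2 ^ n = cayley (ω ^ 2 ^ n) (z ^ 2 ^ n) := by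
  rw [cayley, cayley, div_pow, add_pow_char_pow, add_pow_char_pow, ← pow_mul, ← pow_mul,
    mul_comm]

theorem eq_of_cayley_eq {ω x y : F} (hω : ω ^ 2 + ω + 1 = 0) (hx : x + ω ^ 2 ≠ 0)
    (hy : y + ω ^ 2 ≠ 0) (h : cayley ω x = cayley ω y) : x = y := by
  rw [cayley, cayley, div_eq_div_iff hx hy] at h
  linear_combination h + (x - y) * hω - (x - y) * ω ^ 2 * CharTwo.two_eq_zero (R := F)

theorem cayley_eq_mul_cayley_of_moebius {ω s x X : F} (hω : ω ^ 2 + ω + 1 = 0)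
    (hX : X * ((s + 1) * x + 1) = s * x + s + 1) (hden : (s + 1) * x + 1 ≠ 0)
    (hX2 : X + ω ^ 2 ≠ 0) : cayley ω X = ω * (s + ω ^ 2) / (s + ω) * cayley ω x := by
  have two := CharTwo.two_eq_zero (R := F)
  have h1 : (X + ω) * ((s + 1) * x + 1) = ω ^ 2 * (s + ω ^ 2) * (x + ω) := by
    linear_combination
      hX - (s * x + 1 + (ω - 1) * s + ω * (ω - 1) * x + ω ^ 2 * (ω - 1)) * hω +
        (s * x + 1 + ω * s * x + ω) * two
  have h2 : (X + ω ^ 2) * ((s + 1) * x + 1) = ω * (s + ω) * (x + ω ^ 2) := by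
    linear_combination hX + (1 + ω - ω ^ 2 + s - s * ω + x * s) * hω - (ω + x * s * ω) * two
  have h2' : ω * (s + ω) * (x + ω ^ 2) ≠ 0 := h2 ▸ mul_ne_zero hX2 hden
  have hsω : s + ω ≠ 0 := right_ne_zero_of_mul (left_ne_zero_of_mul h2')
  have hx2 : x + ω ^ 2 ≠ 0 := right_ne_zero_of_mul h2'
  rw [cayley, cayley, div_mul_div_comm, div_eq_div_iff hX2 (mul_ne_zero hsω hx2)]
  refine mul_right_cancel₀ hden ?_
  linear_combination (s + ω) * (x + ω ^ 2) * h1 - ω * (s + ω ^ 2) * (x + ω) * h2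

theorem trinomial_pow_two_pow_mul {k : ℕ} {x : F} (hx : x ^ (2 ^ k + 1) = 1) (a b : ℕ) :
    (x ^ (b + a) + x ^ a + 1) ^ 2 ^ k * x ^ (b + a) = x ^ (b + a) + x ^ b + 1 := by
  have hinv (n : ℕ) : (x ^ n) ^ 2 ^ k * x ^ n = 1 := by
    rw [← pow_mul, mul_comm n, pow_mul, ← mul_pow, ← pow_succ, hx, one_pow]
  rw [add_pow_char_pow, add_pow_char_pow, one_pow]
  linear_combination hinv (b + a) + x ^ b * hinv a

theorem pow_two_pow_add_one_add_self_add_one_ne_zero {k l : ℕ} (hl : l ≠ 0)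
    (hord : padicValNat 2 l ≤ padicValNat 2 k) {x : F} (hx : x ^ (2 ^ k + 1) = 1) :
    x ^ (2 ^ l + 1) + x + 1 ≠ 0 := by
  intro h
  have hrec := trinomial_pow_two_pow_mul hx 1 (2 ^ l)
  rw [pow_one, h, zero_pow (by positivity), zero_mul] at hrec
  obtain rfl : x = 1 := eq_one_of_pow_two_pow_eq_self hl hord hx (by linear_combination -hrec - h)
  exact one_ne_zero (by linear_combination h - CharTwo.two_eq_zero (R := F) : (1 : F) = 0)

theorem pow_two_mul_add_pow_add_one_ne_zero {k : ℕ} (hk : Even k) {x : F}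
    (hx : x ^ (2 ^ k + 1) = 1) (t : ℕ) : x ^ (2 * t) + x ^ t + 1 ≠ 0 := by
  have h := sq_add_self_add_one_ne_zero hk (x := x ^ t)
    (by rw [← pow_mul, mul_comm, pow_mul, hx, one_pow])
  rwa [← pow_mul, mul_comm] at h

theorem moebius_denom_ne_zero {k : ℕ} (hk : Even k) {s x X : F} (hx : x ^ (2 ^ k + 1) = 1)
    (hX : X * ((s + 1) * x + 1) = s * x + s + 1) : (s + 1) * x + 1 ≠ 0 := by
  intro h
  obtain rfl : s = x := by linear_combination X * h - hX - h
  exact sq_add_self_add_one_ne_zero hk hx (by linear_combination h)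

theorem cayley_ne_zero {k : ℕ} (hk : Even k) {ω x : F} (hω : ω ^ 2 + ω + 1 = 0)
    (hx : x ^ (2 ^ k + 1) = 1) : cayley ω x ≠ 0 :=
  div_ne_zero (add_ne_zero_of_sq_add_self_add_one_eq_zero hk hx hω)
    (add_ne_zero_of_sq_add_self_add_one_eq_zero hk hx (sq_sq_add_sq_add_one_eq_zero hω))

theorem cayley_pow_two_pow_add_one {k : ℕ} (hk : Even k) {ω x : F} (hω : ω ^ 2 + ω + 1 = 0)
    (hx : x ^ (2 ^ k + 1) = 1) : cayley ω x ^ (2 ^ k + 1) = ω ^ 2 := by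
  have hω3 : ω ^ 3 = 1 := by linear_combination (ω - 1) * hω
  have hω0 : ω ≠ 0 := by rintro rfl; simp at hω
  have hx0 : x ≠ 0 := by rintro rfl; simp at hx
  have hxq : x ^ 2 ^ k = x⁻¹ := eq_inv_of_mul_eq_one_left (by rw [← pow_succ, hx])
  have h1 := add_ne_zero_of_sq_add_self_add_one_eq_zero hk hx hω
  have h2 := add_ne_zero_of_sq_add_self_add_one_eq_zero hk hx (sq_sq_add_sq_add_one_eq_zero hω)
  have e1 : x⁻¹ + ω = ω * (x + ω ^ 2) / x := by
    field_simp
    linear_combination -hω3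
  have e2 : x⁻¹ + ω ^ 2 = ω ^ 2 * (x + ω) / x := by
    field_simp
    linear_combination -hω3
  rw [pow_succ, cayley_pow_two_pow, pow_two_pow_of_even hω3 hk, hxq, cayley, cayley, e1, e2]
  field_simp
  linear_combination -hω3

theorem cayley_pow_two_pow_eq_mul_cayley {k l : ℕ} (hke : Even k) (hl : l ≠ 0)
    (hord : padicValNat 2 l ≤ padicValNat 2 k) {ω s x : F} (hω : ω ^ 2 + ω + 1 = 0)
    (hx : x ^ (2 ^ k + 1) = 1)
    (hs : (x ^ (2 ^ l + 1) + x ^ 2 ^ l + 1) / (x ^ (2 ^ l + 1) + x + 1) = s) :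
    cayley ω (x ^ 2 ^ l) = ω * (s + ω ^ 2) / (s + ω) * cayley ω x := by
  have hX : x ^ 2 ^ l * ((s + 1) * x + 1) = s * x + s + 1 := by
    rw [div_eq_iff (pow_two_pow_add_one_add_self_add_one_ne_zero hl hord hx)] at hs
    linear_combination hs + (s * x ^ (2 ^ l + 1) - 1) * CharTwo.two_eq_zero (R := F)
  have hXμ : (x ^ 2 ^ l) ^ (2 ^ k + 1) = 1 := by rw [← pow_mul, mul_comm, pow_mul, hx, one_pow]
  exact cayley_eq_mul_cayley_of_moebius hω hX (moebius_denom_ne_zero hke hx hX)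
    (add_ne_zero_of_sq_add_self_add_one_eq_zero hke hXμ (sq_sq_add_sq_add_one_eq_zero hω))

theorem injOn_reciprocal_div {k l : ℕ} (hk : k ≠ 0) (hke : Even k) (hl : l ≠ 0)
    (hord : padicValNat 2 l ≤ padicValNat 2 k) {ω : F} (hω : ω ^ 2 + ω + 1 = 0) :
    Set.InjOn (fun x : F => (x ^ (2 ^ l + 1) + x ^ 2 ^ l + 1) / (x ^ (2 ^ l + 1) + x + 1))
      {x | x ^ (2 ^ k + 1) = 1} := by
  intro x (hx : x ^ (2 ^ k + 1) = 1) y (hy : y ^ (2 ^ k + 1) = 1) hxy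
  dsimp only at hxy
  generalize hs : (x ^ (2 ^ l + 1) + x ^ 2 ^ l + 1) / (x ^ (2 ^ l + 1) + x + 1) = s at hxy
  have hω3 : ω ^ 3 = 1 := by linear_combination (ω - 1) * hω
  have hω0 : ω ≠ 0 := by rintro rfl; simp at hω
  have hXx := cayley_pow_two_pow_eq_mul_cayley hke hl hord hω hx hs
  have hYy := cayley_pow_two_pow_eq_mul_cayley hke hl hord hω hy hxy.symm
  have hc : ω * (s + ω ^ 2) / (s + ω) ≠ 0 :=
    left_ne_zero_of_mul (hXx ▸ cayley_ne_zero hke hω (by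
      rw [← pow_mul, mul_comm, pow_mul, hx, one_pow]))
  set V := cayley ω x / cayley ω y with hV
  have hVk : V ^ (2 ^ k + 1) = 1 := by
    rw [div_pow, cayley_pow_two_pow_add_one hke hω hx, cayley_pow_two_pow_add_one hke hω hy,
      div_self (pow_ne_zero 2 hω0)]
  have hVl : V ^ 2 ^ l = cayley (ω ^ 2 ^ l) (x ^ 2 ^ l) / cayley (ω ^ 2 ^ l) (y ^ 2 ^ l) := by
    rw [div_pow, cayley_pow_two_pow, cayley_pow_two_pow]
  have hV1 : V = 1 := by
    rcases Nat.even_or_odd l with hle | hlo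
    · refine eq_one_of_pow_two_pow_eq_self hl hord hVk ?_
      rw [hVl, pow_two_pow_of_even hω3 hle, hXx, hYy, mul_div_mul_left _ _ hc]
    · have hVinv : V ^ 2 ^ l = V⁻¹ := by
        rw [hVl, pow_two_pow_of_odd hω3 hlo, cayley_sq hω, cayley_sq hω, inv_div_inv, hXx, hYy,
          mul_div_mul_left _ _ hc, hV, inv_div]
      have h2l : padicValNat 2 (2 * l) ≤ padicValNat 2 k := by
        rw [padicValNat.mul two_ne_zero hl, padicValNat.self one_lt_two,
          padicValNat.eq_zero_of_not_dvd hlo.not_two_dvd_nat]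
        exact one_le_padicValNat_of_dvd hk (even_iff_two_dvd.mp hke)
      refine eq_one_of_pow_two_pow_eq_self (by positivity) h2l hVk ?_
      rw [two_mul, pow_add, pow_mul, hVinv, inv_pow, hVinv, inv_inv]
  exact eq_of_cayley_eq hω
    (add_ne_zero_of_sq_add_self_add_one_eq_zero hke hx (sq_sq_add_sq_add_one_eq_zero hω))
    (add_ne_zero_of_sq_add_self_add_one_eq_zero hke hy (sq_sq_add_sq_add_one_eq_zero hω))
    ((div_eq_one_iff_eq (cayley_ne_zero hke hω hy)).mp hV1)

theorem pow_two_pow_mul_eq_mul_reciprocal {k l t r : ℕ}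
    (hmod : r ≡ 2 ^ l + 1 + 2 * t [MOD 2 ^ k + 1]) {c x : F} (hx : x ^ (2 ^ k + 1) = 1)
    (hc : c ^ 2 ^ k = c * x) :
    (c ^ r * ((x ^ (2 ^ l + 1) + x + 1) * (x ^ (2 * t) + x ^ t + 1))) ^ 2 ^ k *
        (x ^ (2 ^ l + 1) + x + 1) =
      c ^ r * ((x ^ (2 ^ l + 1) + x + 1) * (x ^ (2 * t) + x ^ t + 1)) *
        (x ^ (2 ^ l + 1) + x ^ 2 ^ l + 1) := by
  have hD := trinomial_pow_two_pow_mul hx 1 (2 ^ l)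
  have hW := trinomial_pow_two_pow_mul hx t t
  rw [pow_one] at hD
  rw [← two_mul] at hW
  have hcr : (c ^ r) ^ 2 ^ k = c ^ r * x ^ (2 ^ l + 1) * x ^ (2 * t) := by
    rw [← pow_mul, mul_comm, pow_mul, hc, mul_pow, pow_eq_pow_of_modEq hmod hx, pow_add,
      mul_assoc]
  rw [mul_pow, mul_pow, hcr]
  linear_combination
    (c ^ r * ((x ^ (2 * t) + x ^ t + 1) ^ 2 ^ k * x ^ (2 * t)) * (x ^ (2 ^ l + 1) + x + 1)) * hD +
    (c ^ r * (x ^ (2 ^ l + 1) + x ^ 2 ^ l + 1) * (x ^ (2 ^ l + 1) + x + 1)) * hW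

theorem injective_pow_mul_trinomials [Fintype F] {k l t r : ℕ} (hk : k ≠ 0) (hke : Even k)
    (hl : l ≠ 0) (hord : padicValNat 2 l ≤ padicValNat 2 k) (hF : Fintype.card F = (2 ^ k) ^ 2)
    (hr : r ≠ 0) (hrq : r.Coprime (2 ^ k - 1)) (hmod : r ≡ 2 ^ l + 1 + 2 * t [MOD 2 ^ k + 1]) :
    Function.Injective fun c : F =>
      c ^ r * (((c ^ (2 ^ k - 1)) ^ (2 ^ l + 1) + c ^ (2 ^ k - 1) + 1) *
        ((c ^ (2 ^ k - 1)) ^ (2 * t) + (c ^ (2 ^ k - 1)) ^ t + 1)) := by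
  obtain ⟨ω, hω⟩ := exists_sq_add_self_add_one_eq_zero hF
  have hμ {c : F} (hc : c ≠ 0) := pow_sub_one_pow_add_one_eq_one hF hc
  have hD {c : F} (hc : c ≠ 0) := pow_two_pow_add_one_add_self_add_one_ne_zero hl hord (hμ hc)
  have hB {c : F} (hc : c ≠ 0) :=
    mul_ne_zero (hD hc) (pow_two_mul_add_pow_add_one_ne_zero hke (hμ hc) t)
  set f := fun c : F => c ^ r * (((c ^ (2 ^ k - 1)) ^ (2 ^ l + 1) + c ^ (2 ^ k - 1) + 1) *
      ((c ^ (2 ^ k - 1)) ^ (2 * t) + (c ^ (2 ^ k - 1)) ^ t + 1))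
  have hf0 {c : F} : f c = 0 ↔ c = 0 := by
    refine ⟨fun h => by_contra fun hc => mul_ne_zero (pow_ne_zero r hc) (hB hc) h, ?_⟩
    rintro rfl
    simp [f, zero_pow hr]
  have hratio {c : F} (hc : c ≠ 0) :
      ((c ^ (2 ^ k - 1)) ^ (2 ^ l + 1) + (c ^ (2 ^ k - 1)) ^ 2 ^ l + 1) /
        ((c ^ (2 ^ k - 1)) ^ (2 ^ l + 1) + c ^ (2 ^ k - 1) + 1) = f c ^ (2 ^ k - 1) := by
    have hfc : f c ≠ 0 := fun h => hc (hf0.mp h)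
    rw [div_eq_iff (hD hc)]
    refine mul_left_cancel₀ hfc ?_
    rw [← mul_assoc, mul_pow_sub_one (by positivity)]
    exact (pow_two_pow_mul_eq_mul_reciprocal hmod (hμ hc)
      (mul_pow_sub_one (by positivity) c).symm).symm
  intro c c' h
  rcases eq_or_ne c' 0 with rfl | hc'
  · exact hf0.mp (h.trans (hf0.mpr rfl))
  have hc : c ≠ 0 := fun hc => hc' (hf0.mp (h ▸ hf0.mpr hc))
  have hx : c ^ (2 ^ k - 1) = c' ^ (2 ^ k - 1) :=
    injOn_reciprocal_div hk hke hl hord hω (hμ hc) (hμ hc') (by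
      simp only [hratio hc, hratio hc', h])
  have hcr : c ^ r = c' ^ r := mul_right_cancel₀ (hB hc') (by simpa only [f, hx] using h)
  exact eq_of_pow_eq_pow_of_coprime hc' hrq hcr hx

end CharTwo

theorem stmt_7_general (k ℓ t : ℕ) (hk : 0 < k) (hl : 0 < ℓ) (hke : Even k)
    (q Q : ℕ) (hq : q = 2 ^ k) (hQ : Q = 2 ^ ℓ)
    (hord : padicValNat 2 ℓ ≤ padicValNat 2 k)
    (F : Type) [Field F] [Fintype F] (hF : Fintype.card F = q ^ 2)
    (D B : Polynomial F)
    (hD : D = Polynomial.X ^ (Q + 1) + Polynomial.X + 1)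
    (hB : B = D * (Polynomial.X ^ (2 * t) + Polynomial.X ^ t + 1))
    (r : ℕ) (hr : 0 < r) (hrq : Nat.gcd r (q - 1) = 1)
    (hmod : r ≡ Q + 1 + 2 * t [MOD q + 1]) :
    Function.Bijective (fun c : F => c ^ r * B.eval (c ^ (q - 1))) := by
  subst hq hQ hD hB
  have : CharP F 2 := charP_of_card_eq_prime_pow (hF.trans (pow_mul 2 k 2).symm)
  refine Finite.injective_iff_bijective.mp ?_
  simp only [Polynomial.eval_mul, Polynomial.eval_add, Polynomial.eval_pow, Polynomial.eval_X,
    Polynomial.eval_one]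
  exact injective_pow_mul_trinomials hk.ne' hke hl.ne' hord hF hr.ne' hrq hmod

/-- Corollary 5.1, case (4.1): `X^r B(X^{q-1})` with
`B = (X^{Q+1}+X+1)(X^{2t}+X^t+1)` is a permutation polynomial of `F_{q²}`. -/
theorem stmt_7 (k ℓ t : ℕ) (hk : 0 < k) (hl : 0 < ℓ) (ht : 0 < t) (hke : Even k)
    (q Q : ℕ) (hq : q = 2 ^ k) (hQ : Q = 2 ^ ℓ)
    (hord : padicValNat 2 ℓ ≤ padicValNat 2 k)
    (F : Type) [Field F] [Fintype F] (hF : Fintype.card F = q ^ 2)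
    (D B : Polynomial F)
    (hD : D = Polynomial.X ^ (Q + 1) + Polynomial.X + 1)
    (hB : B = D * (Polynomial.X ^ (2 * t) + Polynomial.X ^ t + 1))
    (r : ℕ) (hr : 0 < r) (hrq : Nat.gcd r (q - 1) = 1)
    (hmod : r ≡ Q + 1 + 2 * t [MOD q + 1]) :
    Function.Bijective (fun c : F => c ^ r * B.eval (c ^ (q - 1))) :=
  stmt_7_general k ℓ t hk hl hke q Q hq hQ hord F hF D B hD hB r hr hrq hmod
end
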